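/- arXiv:1804.01435 — 3 statements merged into one kernel-verified Lean document; each statement's English description precedes it below -/
import Mathlib

section
/- Let B be the free monoid of monomials on a totally ordered finite set of variables S, ordered by degree-lexicographic order, and let f : k⟨S⟩ → A be a surjection of augmented k-algebras. Then the set N = { x ∈ B : f(x) ∉ span of { f(y) : y ∈ B, y < x } } is an order ideal of monomials: if u ∈ N and v divides u (i.e. u = u'vu'' for some monomials u', u''), then v ∈ N. -/
/-- The monomial in `k⟨S⟩` corresponding to a word `w` in the free monoid on `S`. -/
noncomputable def mono (k : Type*) [CommSemiring k] {S : Type*} (w : List S) :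
    FreeAlgebra k S :=
  (w.map (FreeAlgebra.ι k)).prod

/-- The degree-lexicographic order on monomials: first by length, then
lexicographically. -/
def DegLexLT {S : Type*} [LinearOrder S] (u v : List S) : Prop :=
  u.length < v.length ∨ (u.length = v.length ∧ List.Lex (· < ·) u v)

lemma mono_append (k : Type*) [CommSemiring k] {S : Type*} (a b : List S) :
    mono k (a ++ b) = mono k a * mono k b := by
  simp [mono]

lemma lex_append_right {S : Type*} [LinearOrder S] :
    ∀ {y v : List S}, List.Lex (· < ·) y v → y.length = v.length →
      ∀ s : List S, List.Lex (· < ·) (y ++ s) (v ++ s) := by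
  intro y v h
  induction h with
  | nil => intro hl; simp at hl
  | rel h => intro _ s; exact List.Lex.rel h
  | cons _ ih => intro hl s; exact List.Lex.cons (ih (by simpa using hl) s)

lemma lex_prepend {S : Type*} [LinearOrder S] (p : List S) {a b : List S}
    (h : List.Lex (· < ·) a b) : List.Lex (· < ·) (p ++ a) (p ++ b) := by
  induction p with
  | nil => simpa using h
  | cons x t ih => exact List.Lex.cons ih

lemma deglex_mul {S : Type*} [LinearOrder S] (p s y v : List S)
    (h : DegLexLT y v) : DegLexLT (p ++ y ++ s) (p ++ v ++ s) := by
  rcases h with h | ⟨hl, hlex⟩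
  · left; simp only [List.length_append]; omega
  · right
    constructor
    · simp [hl]
    · rw [List.append_assoc, List.append_assoc]
      exact lex_prepend p (lex_append_right hlex hl s)

/-- Let `B` be the free monoid of monomials on a totally ordered finite set of variables
`S`, with the degree-lexicographic order, and let `f : k⟨S⟩ → A` be a surjection of
augmented `k`-algebras.  Then `N = { x ∈ B : f(x) ∉ span { f(y) : y < x } }` is an order
ideal of monomials: if `u ∈ N` and `v` divides `u` (`u = u'vu''`), then `v ∈ N`. -/
theorem stmt0 {S : Type*} [Fintype S] [LinearOrder S] (k : Type*) [Field k]
    (A : Type*) [Ring A] [Algebra k A] (f : FreeAlgebra k S →ₐ[k] A)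
    (hf : Function.Surjective f)
    (εA : A →ₐ[k] k)
    (haug : ∀ z, εA (f z) = (FreeAlgebra.lift k (fun _ : S => (0 : k))) z)
    (u : List S)
    (hu : u ∈ {x : List S |
      f (mono k x) ∉ Submodule.span k ((fun y => f (mono k y)) '' {y | DegLexLT y x})})
    (v p s : List S) (hdvd : u = p ++ v ++ s) :
    v ∈ {x : List S |
      f (mono k x) ∉ Submodule.span k ((fun y => f (mono k y)) '' {y | DegLexLT y x})} := by
  simp only [Set.mem_setOf_eq] at hu ⊢
  intro hv
  apply hu
  subst hdvd
  set L : A →ₗ[k] A :=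
    (LinearMap.mulRight k (f (mono k s))).comp (LinearMap.mulLeft k (f (mono k p))) with hL
  have hmem : L (f (mono k v)) ∈
      Submodule.map L (Submodule.span k
        ((fun y => f (mono k y)) '' {y | DegLexLT y v})) :=
    Submodule.mem_map_of_mem hv
  rw [Submodule.map_span] at hmem
  have key : f (mono k (p ++ v ++ s)) = L (f (mono k v)) := by
    simp [hL, mono_append, map_mul, mul_assoc]
  rw [key]
  refine Submodule.span_mono ?_ hmem
  rintro _ ⟨_, ⟨y, hy, rfl⟩, rfl⟩
  exact ⟨p ++ y ++ s, deglex_mul p s y v hy,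
    by simp [hL, mono_append, map_mul, mul_assoc]⟩
end

section
/- For the dual numbers A = k[t]/(t²), the minimal model differential b on the free graded algebra on generators s⁻¹γ_r (r ≥ 0, with |s⁻¹γ_r| = r and γ_r the unique r-chain t^{r+1}) is given by b(s⁻¹γ_r) = Σ_{r₁+r₂=r−1, r₁,r₂≥0} (−1)^{r₁+1} s⁻¹γ_{r₁} ⊗ s⁻¹γ_{r₂}, and this derivation satisfies b² = 0. -/
/-!
Words in `ℕ` span the free algebra on the `s⁻¹γ_r`, and `bder` is the superderivation
`b(xy) = b(x) y + (-1)^|x| x b(y)` of the concatenation product. Since `b(γ_r)` has degree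
`r - 1`, the cross terms of `b(b(γ_r w))` cancel, so `b²(γ_r w) = b²(γ_r) w + γ_r b²(w)` and
everything reduces to `b²(γ_r) = 0`. There, `Σ_i (-1)^(i+1) b(γ_i γ_(r-1-i))` contributes
`Σ (-1)^(c+1) γ_a γ_c γ_d` over `a + c + d = r - 2` through the first factor and the same sum
with the opposite sign through the second.
-/

variable (k : Type*) [Field k]

/-- Push a word-level map forward along the basis of the free module on words.  Words in
the alphabet `ℕ` encode noncommutative monomials in the generators `s⁻¹γ_r` (`r ≥ 0`) of
the minimal model of the dual numbers, `|s⁻¹γ_r| = r`. -/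
noncomputable def mapWords (f : List ℕ → List ℕ) (x : List ℕ →₀ k) : List ℕ →₀ k :=
  x.sum fun u c => Finsupp.single (f u) c

/-- `b(s⁻¹γ_r) = Σ_{r₁+r₂=r−1} (−1)^{r₁+1} s⁻¹γ_{r₁} ⊗ s⁻¹γ_{r₂}`. -/
noncomputable def bgen (r : ℕ) : List ℕ →₀ k :=
  ∑ i ∈ Finset.range r, ((-1 : k) ^ (i + 1)) • Finsupp.single [i, r - 1 - i] (1 : k)

/-- The extension of `b` to words as a superderivation:
`b(γ·w) = b(γ)·w + (−1)^{|γ|} γ·b(w)`. -/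
noncomputable def bword : List ℕ → (List ℕ →₀ k)
  | [] => 0
  | r :: w =>
      mapWords k (· ++ w) (bgen k r) + ((-1 : k) ^ r) • mapWords k (r :: ·) (bword w)

/-- The differential `b` of the minimal model `Ω_∞ Tor_A(k,k)` of the dual numbers
`A = k[t]/(t²)`, on the free module on words in the generators `s⁻¹γ_r`. -/
noncomputable def bder (x : List ℕ →₀ k) : List ℕ →₀ k :=
  x.sum fun w c => c • bword k w

section WordAlgebra

variable (R : Type*) {α : Type*} [CommSemiring R]

noncomputable def wordMul : (List α →₀ R) →ₗ[R] (List α →₀ R) →ₗ[R] (List α →₀ R) :=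
  Finsupp.linearCombination R fun u => Finsupp.lmapDomain R R (u ++ ·)

variable {R}

lemma wordMul_single_left (u : List α) (a : R) (y : List α →₀ R) :
    wordMul R (Finsupp.single u a) y = a • Finsupp.mapDomain (u ++ ·) y := by
  simp [wordMul]

lemma wordMul_single_right (x : List α →₀ R) (v : List α) (b : R) :
    wordMul R x (Finsupp.single v b) = b • Finsupp.mapDomain (· ++ v) x := by
  induction x using Finsupp.induction_linear with
  | zero => simp
  | add x y hx hy => simp [hx, hy, Finsupp.mapDomain_add]
  | single u a => simp [wordMul_single_left, Finsupp.smul_single, mul_comm]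

lemma wordMul_single_single (u v : List α) (a b : R) :
    wordMul R (Finsupp.single u a) (Finsupp.single v b) = Finsupp.single (u ++ v) (a * b) := by
  simp [wordMul_single_left, Finsupp.smul_single]

end WordAlgebra

section GradeSign

variable {R : Type*} [CommRing R]

variable (R) in
noncomputable def gradeSign : (List ℕ →₀ R) →ₗ[R] (List ℕ →₀ R) :=
  Finsupp.linearCombination R fun u => (-1 : R) ^ u.sum • Finsupp.single u 1

lemma gradeSign_single (u : List ℕ) (a : R) :
    gradeSign R (Finsupp.single u a) = (-1 : R) ^ u.sum • Finsupp.single u a := by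
  simp [gradeSign, mul_comm]

end GradeSign

lemma Finset.sum_range_sum_range_swap {M : Type*} [AddCommMonoid M] (n : ℕ)
    (f : ℕ → ℕ → M) :
    ∑ i ∈ Finset.range n, ∑ a ∈ Finset.range i, f i a
      = ∑ a ∈ Finset.range n, ∑ c ∈ Finset.range (n - 1 - a), f (a + 1 + c) a := by
  rw [Finset.sum_comm' (t' := Finset.range n) (s' := fun a => Finset.Ico (a + 1) n)]
  · refine Finset.sum_congr rfl fun a _ => ?_
    rw [Finset.sum_Ico_eq_sum_range]
    exact Finset.sum_congr (by congr 1; omega) fun c _ => rfl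
  · intro i a
    simp only [Finset.mem_range, Finset.mem_Ico]
    omega

lemma bder_eq_linearCombination (x : List ℕ →₀ k) :
    bder k x = Finsupp.linearCombination k (bword k) x :=
  (Finsupp.linearCombination_apply _ _).symm

lemma bder_single (w : List ℕ) (a : k) : bder k (Finsupp.single w a) = a • bword k w := by
  rw [bder_eq_linearCombination, Finsupp.linearCombination_single]

lemma bder_zero : bder k 0 = 0 := by
  rw [bder_eq_linearCombination, map_zero]

lemma bder_add (x y : List ℕ →₀ k) : bder k (x + y) = bder k x + bder k y := by
  simp only [bder_eq_linearCombination, map_add]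

lemma bder_smul (a : k) (x : List ℕ →₀ k) : bder k (a • x) = a • bder k x := by
  simp only [bder_eq_linearCombination, map_smul]

lemma bword_nil : bword k [] = 0 := rfl

lemma bword_cons (r : ℕ) (w : List ℕ) :
    bword k (r :: w) = Finsupp.mapDomain (· ++ w) (bgen k r)
      + (-1 : k) ^ r • Finsupp.mapDomain (r :: ·) (bword k w) := rfl

lemma bword_singleton (r : ℕ) : bword k [r] = bgen k r := by
  simp only [bword_cons, bword_nil, Finsupp.mapDomain_zero, smul_zero,
    add_zero, List.append_nil]
  exact Finsupp.mapDomain_id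

lemma bword_append (u v : List ℕ) :
    bword k (u ++ v) = Finsupp.mapDomain (· ++ v) (bword k u)
      + (-1 : k) ^ u.sum • Finsupp.mapDomain (u ++ ·) (bword k v) := by
  induction u with
  | nil =>
    simp only [List.nil_append, bword_nil, Finsupp.mapDomain_zero, zero_add,
      List.sum_nil, pow_zero, one_smul]
    exact Finsupp.mapDomain_id.symm
  | cons r u ih =>
    simp only [List.cons_append, bword_cons, ih, Finsupp.mapDomain_add, Finsupp.mapDomain_smul,
      smul_add, smul_smul, ← Finsupp.mapDomain_comp, Function.comp_def, List.append_assoc,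
      List.sum_cons, pow_add, add_assoc]

theorem bder_wordMul (x y : List ℕ →₀ k) :
    bder k (wordMul k x y) = wordMul k (bder k x) y + wordMul k (gradeSign k x) (bder k y) := by
  induction x using Finsupp.induction_linear generalizing y with
  | zero => simp [bder_zero]
  | add x x' hx hx' => simp only [map_add, LinearMap.add_apply, bder_add, hx, hx']; abel
  | single u a =>
    induction y using Finsupp.induction_linear with
    | zero => simp [bder_zero]
    | add y y' hy hy' => simp only [map_add, bder_add, hy, hy']; abel
    | single v b =>
      rw [wordMul_single_single, bder_single, bword_append, bder_single, bder_single,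
        gradeSign_single, Finsupp.smul_single, wordMul_single_left, wordMul_single_right,
        Finsupp.mapDomain_smul, Finsupp.mapDomain_smul]
      module

lemma mapDomain_bgen (f : List ℕ → List ℕ) (r : ℕ) :
    Finsupp.mapDomain f (bgen k r)
      = ∑ i ∈ Finset.range r, (-1 : k) ^ (i + 1) • Finsupp.single (f [i, r - 1 - i]) 1 := by
  simp [bgen, Finsupp.mapDomain_finsetSum]

lemma gradeSign_bgen (r : ℕ) : gradeSign k (bgen k r) = -((-1 : k) ^ r • bgen k r) := by
  simp only [bgen, map_sum, map_smul, gradeSign_single, Finset.smul_sum, ← Finset.sum_neg_distrib]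
  refine Finset.sum_congr rfl fun i hi => ?_
  have hir := Finset.mem_range.mp hi
  obtain ⟨m, rfl⟩ : ∃ m, r = m + 1 := ⟨r - 1, by omega⟩
  have hsum : [i, m + 1 - 1 - i].sum = m := by simp only [List.sum_cons, List.sum_nil]; omega
  rw [hsum, smul_comm, pow_succ]
  module

lemma bword_pair (i j : ℕ) :
    bword k [i, j] =
      ∑ a ∈ Finset.range i, (-1 : k) ^ (a + 1) • Finsupp.single [a, i - 1 - a, j] 1
        + (-1 : k) ^ i •
          ∑ b ∈ Finset.range j, (-1 : k) ^ (b + 1) • Finsupp.single [i, b, j - 1 - b] 1 := by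
  rw [bword_cons, bword_singleton, mapDomain_bgen, mapDomain_bgen]
  simp only [List.cons_append, List.nil_append]

theorem bder_bgen (r : ℕ) : bder k (bgen k r) = 0 := by
  have expand : bder k (bgen k r)
      = ∑ i ∈ Finset.range r, (-1 : k) ^ (i + 1) • bword k [i, r - 1 - i] := by
    simp only [bgen, bder_eq_linearCombination, map_sum, map_smul,
      Finsupp.linearCombination_single, one_smul]
  simp only [expand, bword_pair, smul_add, Finset.smul_sum, smul_smul, Finset.sum_add_distrib]
  -- reindex the first sum by `i = a + 1 + c`; its `(a, c)` term then cancels the second's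
  rw [Finset.sum_range_sum_range_swap, ← Finset.sum_add_distrib]
  refine Finset.sum_eq_zero fun a ha => ?_
  rw [← Finset.sum_add_distrib]
  refine Finset.sum_eq_zero fun c hc => ?_
  simp only [Finset.mem_range] at ha hc
  rw [show a + 1 + c - 1 - a = c by omega, show r - 1 - (a + 1 + c) = r - 1 - a - 1 - c by omega,
    ← add_smul]
  convert zero_smul k _
  ring_nf

theorem bder_bword (w : List ℕ) : bder k (bword k w) = 0 := by
  induction w with
  | nil => rw [bword_nil, bder_zero]
  | cons r w ih =>
    have hgen : bder k (Finsupp.single [r] 1) = bgen k r := by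
      rw [bder_single, one_smul, bword_singleton]
    have hword : bder k (Finsupp.single w 1) = bword k w := by rw [bder_single, one_smul]
    have hprod : bword k (r :: w)
        = bder k (wordMul k (Finsupp.single [r] 1) (Finsupp.single w 1)) := by
      rw [wordMul_single_single, bder_single, one_mul, one_smul, List.singleton_append]
    rw [hprod, bder_wordMul, hgen, hword, gradeSign_single, bder_add, bder_wordMul, bder_wordMul,
      bder_bgen, gradeSign_bgen, hword, bder_smul, hgen, ih]
    simp

/-- For the dual numbers `A = k[t]/(t²)`, the minimal model differential `b` on the free
graded algebra on the generators `s⁻¹γ_r` (`γ_r = t^{r+1}` the unique `r`-chain,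
`|s⁻¹γ_r| = r`) is given by
`b(s⁻¹γ_r) = Σ_{r₁+r₂=r−1} (−1)^{r₁+1} s⁻¹γ_{r₁} ⊗ s⁻¹γ_{r₂}`, and this derivation
squares to zero. -/
theorem stmt13 :
    (∀ r : ℕ, bder k (Finsupp.single [r] (1 : k)) =
      ∑ i ∈ Finset.range r,
        ((-1 : k) ^ (i + 1)) • Finsupp.single [i, r - 1 - i] (1 : k)) ∧
    (∀ x : List ℕ →₀ k, bder k (bder k x) = 0) := by
  refine ⟨fun r => ?_, fun x => ?_⟩
  · rw [bder_single, one_smul, bword_singleton, bgen]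
  · induction x using Finsupp.induction_linear with
    | zero => rw [bder_zero, bder_zero]
    | add x y hx hy => rw [bder_add, bder_add, hx, hy, add_zero]
    | single w a => rw [bder_single, bder_smul, bder_bword, smul_zero]
end

section
/- Let γ = x_{i₁}⋯x_{iₜ} be an Anick n-chain with n ≥ 1. Then the interlaced sequences (a₁,…,aₙ) and (b₁,…,bₙ) witnessing that γ is an n-chain are uniquely determined, and there is a unique s = b_{n−1} < t such that x_{i₁}⋯x_{iₛ} is an (n−1)-chain and the remaining tail x_{i_{s+1}}⋯x_{iₜ} contains no obstruction as a divisor. -/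
/-- Segment of `w` from 1-based position `a` to position `b` (inclusive). -/
def seg {ι : Type*} (w : List ι) (a b : ℕ) : List ι := (w.drop (a - 1)).take (b + 1 - a)

/-- Anick `n`-prechain with explicit interlaced sequences `a`, `b` (0-indexed), for the
set of obstructions `V`. -/
def AnickPrechainWith {ι : Type*} (V : Set (List ι)) (n : ℕ) (a b : ℕ → ℕ) (w : List ι) : Prop :=
  (∀ i, i + 1 < n → a i < a (i + 1)) ∧ (∀ i, i + 1 < n → b i < b (i + 1)) ∧
  a 0 = 1 ∧ b (n - 1) = w.length ∧ (∀ i, i + 1 < n → a (i + 1) ≤ b i) ∧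
  (∀ j, j < n → a j ≤ b j ∧ seg w (a j) (b j) ∈ V)

def AnickPrechain {ι : Type*} (V : Set (List ι)) (n : ℕ) (w : List ι) : Prop :=
  ∃ a b, AnickPrechainWith V n a b w

/-- Anick chain condition: a prechain whose witnessing sequences may be chosen so that no
proper prefix `take s` with `s < b j` is a `(j+1)`-prechain. -/
def AnickChainWith {ι : Type*} (V : Set (List ι)) (n : ℕ) (a b : ℕ → ℕ) (w : List ι) : Prop :=
  AnickPrechainWith V n a b w ∧ ∀ j, j < n → ∀ s, s < b j → ¬ AnickPrechain V (j + 1) (w.take s)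

/-- `w` is an Anick `n`-chain; by convention the `0`-chains are the variables. -/
def AnickChain {ι : Type*} (V : Set (List ι)) (n : ℕ) (w : List ι) : Prop :=
  if n = 0 then w.length = 1 else ∃ a b, AnickChainWith V n a b w


def Divides {ι : Type*} (v u : List ι) : Prop := ∃ p s, u = p ++ v ++ s

section Helpers
variable {ι : Type*}

lemma mono_of_strict {f : ℕ → ℕ} {n : ℕ} (h : ∀ i, i + 1 < n → f i < f (i + 1)) :
    ∀ i j, i ≤ j → j < n → f i ≤ f j := by
  intro i j hij hj
  induction j with
  | zero =>
      obtain rfl : i = 0 := Nat.le_zero.mp hij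
      exact le_rfl
  | succ k ih =>
      rcases Nat.eq_or_lt_of_le hij with rfl | hlt
      · exact le_rfl
      · exact le_trans (ih (by omega) (by omega)) (le_of_lt (h k hj))

lemma seg_length (w : List ι) {a b : ℕ} (ha : 1 ≤ a) (hb : b ≤ w.length) :
    (seg w a b).length = b + 1 - a := by
  simp [seg]; omega

lemma seg_take (w : List ι) {m a b : ℕ} (ha : 1 ≤ a) (hb : b ≤ m) :
    seg (w.take m) a b = seg w a b := by
  unfold seg
  rw [List.drop_take, List.take_take]
  congr 1
  omega

lemma seg_drop_seg (w : List ι) {A A' B : ℕ} (h1 : 1 ≤ A) (hAA : A ≤ A') :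
    (seg w A B).drop (A' - A) = seg w A' B := by
  unfold seg
  rw [List.drop_take, List.drop_drop]
  congr 1
  · omega
  · congr 1; omega

lemma seg_eq_drop (w : List ι) {A B : ℕ} (h1 : 1 ≤ A) (hB : w.length ≤ B) :
    seg w A B = w.drop (A - 1) := by
  unfold seg
  rw [List.take_of_length_le]
  simp; omega

end Helpers

section Main
variable {ι : Type*} {V : Set (List ι)}

/-- Facts extracted from a prechain. -/
lemma prechain_facts {n : ℕ} {a b : ℕ → ℕ} {w : List ι}
    (h : AnickPrechainWith V n a b w) (hn : 1 ≤ n) :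
    (∀ j, j < n → 1 ≤ a j) ∧ (∀ j, j < n → b j ≤ w.length) := by
  obtain ⟨hai, hbi, ha0, hbl, hint, hsegs⟩ := h
  constructor
  · intro j hj
    have := mono_of_strict hai 0 j (Nat.zero_le _) hj
    omega
  · intro j hj
    have := mono_of_strict hbi j (n - 1) (by omega) (by omega)
    omega

/-- The prefix up to `b j` is a `(j+1)`-prechain. -/
lemma prechain_prefix {n : ℕ} {a b : ℕ → ℕ} {w : List ι}
    (h : AnickPrechainWith V n a b w) {j : ℕ} (hj : j < n) :
    AnickPrechainWith V (j + 1) a b (w.take (b j)) := by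
  have hn : 1 ≤ n := by omega
  obtain ⟨h1, hB⟩ := prechain_facts h hn
  obtain ⟨hai, hbi, ha0, hbl, hint, hsegs⟩ := h
  have hbmono : ∀ i, i ≤ j → b i ≤ b j := fun i hi => mono_of_strict hbi i j hi hj
  refine ⟨fun i hi => hai i (by omega), fun i hi => hbi i (by omega), ha0, ?_, 
    fun i hi => hint i (by omega), fun i hi => ?_⟩
  · simp only [Nat.add_sub_cancel, List.length_take]
    have := hB j hj; omega
  · have hi' : i < n := by omega
    refine ⟨(hsegs i hi').1, ?_⟩
    rw [seg_take w (h1 i hi') (hbmono i (by omega))]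
    exact (hsegs i hi').2

/-- Uniqueness of the left endpoint of an obstruction with given right endpoint. -/
lemma seg_start_unique (hV : ∀ u ∈ V, ∀ v ∈ V, Divides v u → u = v)
    (w : List ι) {A A' B : ℕ} (h1 : 1 ≤ A) (h1' : 1 ≤ A') (hAB : A ≤ B) (hAB' : A' ≤ B)
    (hB : B ≤ w.length) (hu : seg w A B ∈ V) (hu' : seg w A' B ∈ V) : A = A' := by
  have key : ∀ C C' : ℕ, 1 ≤ C → 1 ≤ C' → C ≤ B → C' ≤ B → C ≤ C' →
      seg w C B ∈ V → seg w C' B ∈ V → C = C' := by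
    intro C C' hC hC' hCB hCB' hCC hv hv'
    have hdiv : Divides (seg w C' B) (seg w C B) := by
      refine ⟨(seg w C B).take (C' - C), [], ?_⟩
      rw [List.append_nil, ← seg_drop_seg w hC hCC, List.take_append_drop]
    have heq := hV _ hv _ hv' hdiv
    have hl1 := seg_length w hC hB
    have hl2 := seg_length w hC' hB
    rw [heq] at hl1
    omega
  rcases le_total A A' with h | h
  · exact key A A' h1 h1' hAB hAB' h hu hu'
  · exact (key A' A h1' h1 hAB' hAB h hu' hu).symm

/-- No obstruction divides the tail after position `s`, provided `a (n-1) ≤ s`. -/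
lemma tail_no_obstruction (hV : ∀ u ∈ V, ∀ v ∈ V, Divides v u → u = v)
    {n : ℕ} {a b : ℕ → ℕ} {γ : List ι}
    (h : AnickPrechainWith V n a b γ) (hn : 1 ≤ n) {s : ℕ}
    (hs1 : a (n - 1) ≤ s) (hs2 : s ≤ γ.length) :
    ∀ v ∈ V, ¬ Divides v (γ.drop s) := by
  intro v hv ⟨p, q, hpq⟩
  obtain ⟨h1, hB⟩ := prechain_facts h hn
  obtain ⟨hai, hbi, ha0, hbl, hint, hsegs⟩ := h
  set A := a (n - 1) with hA
  have hA1 : 1 ≤ A := h1 _ (by omega)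
  have hAb : A ≤ b (n - 1) := (hsegs _ (by omega)).1
  have hu : seg γ A γ.length ∈ V := by rw [← hbl]; exact (hsegs _ (by omega)).2
  have huv : seg γ A γ.length = γ.drop (A - 1) := seg_eq_drop γ hA1 le_rfl
  have hdivu : Divides v (seg γ A γ.length) := by
    refine ⟨(seg γ A γ.length).take (s - (A - 1)) ++ p, q, ?_⟩
    rw [List.append_assoc, List.append_assoc, ← List.append_assoc p, ← hpq]
    have : (seg γ A γ.length).drop (s - (A - 1)) = γ.drop s := by
      rw [huv, List.drop_drop]
      congr 1; omega
    rw [← this, List.take_append_drop]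
  have heq := hV _ hu _ hv hdivu
  have hlu : (seg γ A γ.length).length = γ.length + 1 - A := seg_length γ hA1 le_rfl
  have hlenv : v.length = (seg γ A γ.length).length := by rw [heq]
  have hld : (γ.drop s).length = γ.length - s := by simp
  have : p.length + v.length + q.length = γ.length - s := by
    rw [← hld, hpq]; simp; omega
  omega

end Main

lemma b_unique {ι : Type*} {V : Set (List ι)} {n : ℕ} {a b a' b' : ℕ → ℕ} {γ : List ι}
    (h : AnickChainWith V n a b γ) (h' : AnickChainWith V n a' b' γ) {j : ℕ} (hj : j < n) :
    b j = b' j := by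
  rcases Nat.lt_trichotomy (b j) (b' j) with hlt | heq | hlt
  · exact absurd ⟨a, b, prechain_prefix h.1 hj⟩ (h'.2 j hj (b j) hlt)
  · exact heq
  · exact absurd ⟨a', b', prechain_prefix h'.1 hj⟩ (h.2 j hj (b' j) hlt)


/-- Let `γ` be an Anick `n`-chain, `n ≥ 1`, for an obstruction set `V` (an antichain of
monomials of length at least `2`).  Then the interlaced sequences `(a₁,…,aₙ)`,
`(b₁,…,bₙ)` witnessing that `γ` is an `n`-chain are uniquely determined, and there is a
unique `s < |γ|` (namely `s = b_{n−1}`) such that the prefix of `γ` of length `s` is an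
`(n−1)`-chain and the remaining tail contains no obstruction as a divisor. -/
theorem stmt17 {ι : Type*} (V : Set (List ι))
    (hV : ∀ u ∈ V, ∀ v ∈ V, Divides v u → u = v)
    (hlen : ∀ v ∈ V, 2 ≤ v.length)
    (n : ℕ) (hn : 1 ≤ n) (γ : List ι)
    (a b : ℕ → ℕ) (hab : AnickChainWith V n a b γ) :
    (∀ a' b', AnickChainWith V n a' b' γ → ∀ j < n, a j = a' j ∧ b j = b' j) ∧
    (∃! s : ℕ, s < γ.length ∧ AnickChain V (n - 1) (γ.take s) ∧
      ∀ v ∈ V, ¬ Divides v (γ.drop s)) ∧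
    (2 ≤ n →
      b (n - 2) < γ.length ∧ AnickChain V (n - 1) (γ.take (b (n - 2))) ∧
        ∀ v ∈ V, ¬ Divides v (γ.drop (b (n - 2)))) := by
  have hpre := hab.1
  have hmin := hab.2
  obtain ⟨h1, hB⟩ := prechain_facts hpre hn
  obtain ⟨hai, hbi, ha0, hbl, hint, hsegs⟩ := hpre
  have hpre := hab.1
  -- the n ≥ 2 part
  have main2 : 2 ≤ n → b (n - 2) < γ.length ∧ AnickChain V (n - 1) (γ.take (b (n - 2))) ∧
      ∀ v ∈ V, ¬ Divides v (γ.drop (b (n - 2))) := by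
    intro h2
    have h12 : n - 2 + 1 = n - 1 := by omega
    have hlt : b (n - 2) < γ.length := by
      have := hbi (n - 2) (by omega)
      rw [h12] at this; omega
    refine ⟨hlt, ?_, ?_⟩
    · rw [AnickChain, if_neg (by omega)]
      refine ⟨a, b, ?_, ?_⟩
      · have hp := prechain_prefix (V := V) hpre (show n - 2 < n by omega)
        rwa [h12] at hp
      · intro i hi s hs
        rw [List.take_take, min_eq_left]
        · exact hmin i (by omega) s hs
        · have hmono := mono_of_strict hbi i (n - 2) (by omega) (by omega)
          omega
    · refine tail_no_obstruction hV hpre hn ?_ (le_of_lt hlt)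
      have := hint (n - 2) (by omega)
      rw [h12] at this; exact this
  refine ⟨?_, ?_, main2⟩
  · -- uniqueness of witnesses
    intro a' b' hab' j hj
    have hbj : b j = b' j := b_unique hab hab' hj
    obtain ⟨h1', hB'⟩ := prechain_facts hab'.1 hn
    have hsegs' := hab'.1.2.2.2.2.2
    refine ⟨?_, hbj⟩
    refine seg_start_unique hV γ (h1 j hj) (h1' j hj) (hsegs j hj).1 ?_ (hB j hj)
      (hsegs j hj).2 ?_
    · have := (hsegs' j hj).1; omega
    · rw [hbj]; exact (hsegs' j hj).2
  · -- unique s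
    rcases Nat.lt_or_ge n 2 with h2 | h2
    · -- n = 1
      obtain rfl : n = 1 := by omega
      have hγV : γ ∈ V := by
        have := (hsegs 0 (by omega)).2
        rw [ha0] at this
        simp only [Nat.sub_self] at hbl
        rw [hbl] at this
        simpa [seg] using this
      have hγ2 : 2 ≤ γ.length := hlen γ hγV
      refine ⟨1, ⟨by omega, ?_, ?_⟩, ?_⟩
      · rw [AnickChain, if_pos rfl]
        simp; omega
      · refine tail_no_obstruction hV hpre (by omega) ?_ (by omega)
        simp [ha0]
      · rintro s' ⟨hs'1, hs'2, hs'3⟩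
        rw [AnickChain, if_pos rfl] at hs'2
        simp at hs'2
        omega
    · -- n ≥ 2
      obtain ⟨hlt, hch, htail⟩ := main2 h2
      refine ⟨b (n - 2), ⟨hlt, hch, htail⟩, ?_⟩
      rintro s' ⟨hs'1, hs'2, hs'3⟩
      rw [AnickChain, if_neg (by omega)] at hs'2
      obtain ⟨a'', b'', hpre'', hmin''⟩ := hs'2
      have hge : b (n - 2) ≤ s' := by
        by_contra hc
        have h12 : n - 2 + 1 = n - 1 := by omega
        refine hmin (n - 2) (by omega) s' (by omega) ?_
        rw [h12]
        exact ⟨a'', b'', hpre''⟩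
      have hle : s' ≤ b (n - 2) := by
        by_contra hc
        push_neg at hc
        have hb'' : b'' (n - 1 - 1) = s' := by
          have := hpre''.2.2.2.1
          rw [List.length_take] at this
          omega
        have h112 : n - 1 - 1 = n - 2 := by omega
        refine hmin'' (n - 2) (by omega) (b (n - 2)) (by rw [← h112] at hc ⊢; omega) ?_
        rw [List.take_take, min_eq_left (le_of_lt hc)]
        exact ⟨a, b, prechain_prefix hpre (by omega)⟩
      omega
end
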